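/- arXiv:2203.15607 — 4 statements merged into one kernel-verified Lean document; each statement's English description precedes it below -/
import Mathlib

section
/- Let X be a finite type, Q a probability mass function on X, and Z : X × X → (0, ∞). For λ ≥ 1, define E_x(λ) = −λ · log( ∑_{x,x'} Q(x) Q(x') Z(x,x')^(1/λ) ). Then the derivative of E_x with respect to λ equals the relative entropy D(Ψ_λ ‖ Q⊗Q), where Ψ_λ(x,x') = Q(x)Q(x') Z(x,x')^(1/λ) / (∑_{u,u'} Q(u)Q(u') Z(u,u')^(1/λ)). In particular E_x is nondecreasing in λ on [1, ∞). -/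
/-!
Write `S(λ) = ∑ w z^(1/λ)` with `w = Q ⊗ Q` and let `Ψ_λ = w z^(1/λ) / S(λ)`. Differentiating,
`(-λ log S)' = -log S + (∑ w z^(1/λ) log z) / (λ S)`, and since `log (Ψ_λ / w) = (log z) / λ - log S`
and `∑ Ψ_λ = 1`, this is exactly `D(Ψ_λ ‖ w)`. Gibbs' inequality makes it nonnegative, hence the
monotonicity.
-/

open Real Finset InformationTheory

section

variable {ι : Type*} [Fintype ι]

noncomputable def relEntropy (p q : ι → ℝ) : ℝ := ∑ i, p i * log (p i / q i)

/-- `Ψ_λ` of the paper, for the weights `w = Q ⊗ Q`. -/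
noncomputable def tiltedWeights (w z : ι → ℝ) (l : ℝ) (i : ι) : ℝ :=
  w i * z i ^ (1 / l) / ∑ j, w j * z j ^ (1 / l)

lemma mul_klFun_div (p : ℝ) {q : ℝ} (hq : q ≠ 0) :
    q * klFun (p / q) = p * log (p / q) + q - p := by
  rw [klFun_apply]
  field_simp

/-- Gibbs' inequality, via `q · klFun (p / q) ≥ 0`. -/
lemma relEntropy_nonneg {p q : ι → ℝ} (hp : ∀ i, 0 ≤ p i) (hq : ∀ i, 0 < q i)
    (hsum : ∑ i, p i = ∑ i, q i) : 0 ≤ relEntropy p q := by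
  have h : ∑ i, q i * klFun (p i / q i) = relEntropy p q := by
    simp only [mul_klFun_div _ (hq _).ne', sum_sub_distrib, sum_add_distrib, hsum, relEntropy]
    ring
  rw [← h]
  exact sum_nonneg fun i _ => mul_nonneg (hq i).le (klFun_nonneg (div_nonneg (hp i) (hq i).le))

lemma sum_tiltedWeights {w z : ι → ℝ} {l : ℝ} (h : ∑ j, w j * z j ^ (1 / l) ≠ 0) :
    ∑ i, tiltedWeights w z l i = 1 := by
  simp only [tiltedWeights, ← sum_div, div_self h]

lemma sum_mul_rpow_pos [Nonempty ι] {w z : ι → ℝ} (hw : ∀ i, 0 < w i) (hz : ∀ i, 0 < z i)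
    (s : ℝ) : 0 < ∑ i, w i * z i ^ s :=
  sum_pos (fun i _ => mul_pos (hw i) (rpow_pos_of_pos (hz i) s)) univ_nonempty

lemma relEntropy_tiltedWeights {w z : ι → ℝ} (hw : ∀ i, w i ≠ 0) (hz : ∀ i, 0 < z i) {l : ℝ}
    (hS : 0 < ∑ j, w j * z j ^ (1 / l)) :
    relEntropy (tiltedWeights w z l) w =
      (∑ i, w i * z i ^ (1 / l) * log (z i)) / (l * ∑ j, w j * z j ^ (1 / l)) -
        log (∑ j, w j * z j ^ (1 / l)) := by
  have hterm : ∀ i, tiltedWeights w z l i * log (tiltedWeights w z l i / w i) =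
      w i * z i ^ (1 / l) * log (z i) / (l * ∑ j, w j * z j ^ (1 / l)) -
        tiltedWeights w z l i * log (∑ j, w j * z j ^ (1 / l)) := by
    intro i
    have hdiv : tiltedWeights w z l i / w i = z i ^ (1 / l) / ∑ j, w j * z j ^ (1 / l) := by
      rw [tiltedWeights]
      field_simp [hw i]
    rw [hdiv, log_div (rpow_pos_of_pos (hz i) _).ne' hS.ne', log_rpow (hz i), tiltedWeights]
    field_simp
  simp only [relEntropy, hterm, sum_sub_distrib, ← sum_mul, ← sum_div, sum_tiltedWeights hS.ne']
  ring

lemma hasDerivAt_sum_mul_rpow_one_div (w : ι → ℝ) {z : ι → ℝ} (hz : ∀ i, 0 < z i) {l : ℝ}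
    (hl : l ≠ 0) :
    HasDerivAt (fun lam => ∑ i, w i * z i ^ (1 / lam))
      (-(∑ i, w i * z i ^ (1 / l) * log (z i)) / l ^ 2) l := by
  have hinv : HasDerivAt (fun lam : ℝ => 1 / lam) (-(l ^ 2)⁻¹) l := by
    simpa only [one_div] using hasDerivAt_inv hl
  refine (HasDerivAt.fun_sum fun i _ => HasDerivAt.const_mul (w i)
    ((hasStrictDerivAt_const_rpow (hz i) (1 / l)).hasDerivAt.comp l hinv)).congr_deriv ?_
  simp only [neg_div, sum_div, ← sum_neg_distrib]
  exact sum_congr rfl fun i _ => by ring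

theorem hasDerivAt_neg_mul_log_sum_mul_rpow_one_div [Nonempty ι] {w z : ι → ℝ}
    (hw : ∀ i, 0 < w i) (hz : ∀ i, 0 < z i) {l : ℝ} (hl : l ≠ 0) :
    HasDerivAt (fun lam => -lam * log (∑ i, w i * z i ^ (1 / lam)))
      (relEntropy (tiltedWeights w z l) w) l := by
  have hS := sum_mul_rpow_pos hw hz (1 / l)
  refine ((hasDerivAt_neg l).mul
    ((hasDerivAt_sum_mul_rpow_one_div w hz hl).log hS.ne')).congr_deriv ?_
  rw [relEntropy_tiltedWeights (fun i => (hw i).ne') hz hS]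
  field_simp
  ring

theorem monotoneOn_neg_mul_log_sum_mul_rpow_one_div {w z : ι → ℝ} (hw : ∀ i, 0 < w i)
    (hw1 : ∑ i, w i = 1) (hz : ∀ i, 0 < z i) :
    MonotoneOn (fun lam => -lam * log (∑ i, w i * z i ^ (1 / lam))) (Set.Ioi 0) := by
  have : Nonempty ι := univ_nonempty_iff.mp (nonempty_of_sum_ne_zero (hw1 ▸ one_ne_zero))
  have hderiv : ∀ l ∈ Set.Ioi (0 : ℝ), HasDerivAt
      (fun lam => -lam * log (∑ i, w i * z i ^ (1 / lam))) (relEntropy (tiltedWeights w z l) w) l :=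
    fun l hl => hasDerivAt_neg_mul_log_sum_mul_rpow_one_div hw hz (ne_of_gt hl)
  refine monotoneOn_of_hasDerivWithinAt_nonneg (convex_Ioi 0) (HasDerivAt.continuousOn hderiv)
    (fun l hl => (hderiv l (interior_subset hl)).hasDerivWithinAt) fun l _ => ?_
  have hS := sum_mul_rpow_pos hw hz (1 / l)
  refine relEntropy_nonneg (fun i => ?_) hw (by rw [sum_tiltedWeights hS.ne', hw1])
  exact div_nonneg (mul_pos (hw i) (rpow_pos_of_pos (hz i) _)).le hS.le

end

/-- The derivative of the expurgated-type function
`E_x λ = -λ log (∑ x x', Q x Q x' Z(x,x')^(1/λ))` at any `λ ≥ 1` equals the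
relative entropy `D(Ψ_λ ‖ Q ⊗ Q)` where
`Ψ_λ (x,x') = Q x Q x' Z(x,x')^(1/λ) / (∑ u u', Q u Q u' Z(u,u')^(1/λ))`.
In particular `E_x` is nondecreasing on `[1,∞)`. -/
theorem deriv_Ex_eq_relativeEntropy {X : Type*} [Fintype X]
    (Q : X → ℝ) (hQpos : ∀ x, 0 < Q x) (hQ1 : ∑ x, Q x = 1)
    (Z : X × X → ℝ) (hZ : ∀ p, 0 < Z p) :
    (∀ l : ℝ, 1 ≤ l →
      HasDerivAt (fun lam : ℝ =>
          -lam * Real.log (∑ x, ∑ x', Q x * Q x' * Z (x, x') ^ (1 / lam)))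
        (∑ x, ∑ x',
          (Q x * Q x' * Z (x, x') ^ (1 / l) /
              (∑ u, ∑ u', Q u * Q u' * Z (u, u') ^ (1 / l))) *
            Real.log ((Q x * Q x' * Z (x, x') ^ (1 / l) /
                (∑ u, ∑ u', Q u * Q u' * Z (u, u') ^ (1 / l))) /
              (Q x * Q x'))) l) ∧
    MonotoneOn (fun lam : ℝ =>
        -lam * Real.log (∑ x, ∑ x', Q x * Q x' * Z (x, x') ^ (1 / lam)))
      (Set.Ici (1:ℝ)) := by
  have hw : ∀ p : X × X, 0 < Q p.1 * Q p.2 := fun p => mul_pos (hQpos _) (hQpos _)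
  have hw1 : ∑ p : X × X, Q p.1 * Q p.2 = 1 := by
    rw [Fintype.sum_prod_type' fun x y => Q x * Q y, ← sum_mul_sum, hQ1, one_mul]
  have : Nonempty X := univ_nonempty_iff.mp (nonempty_of_sum_ne_zero (hQ1 ▸ one_ne_zero))
  simp only [← Fintype.sum_prod_type', Prod.mk.eta]
  refine ⟨fun l hl => hasDerivAt_neg_mul_log_sum_mul_rpow_one_div hw hZ (by positivity), ?_⟩
  exact (monotoneOn_neg_mul_log_sum_mul_rpow_one_div hw hw1 hZ).mono
    fun l (hl : 1 ≤ l) => show 0 < l by linarith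
end

section
/- Let X be finite, Q a probability mass function on X, and Z : X×X → [0,∞). Then lim_{λ→∞} E_x(λ)/(2λ) = −(1/2)·log( ∑_{x,x'} Q(x)Q(x')·𝟙{Z(x,x') > 0} ), where E_x(λ) = −λ log(∑_{x,x'} Q(x)Q(x') Z(x,x')^(1/λ)). -/
open Real Finset Filter

/-- `lim_{λ→∞} E_x(λ)/(2λ) = -(1/2) log (∑ x x', Q x Q x' 𝟙{Z(x,x') > 0})`,
where `E_x λ = -λ log (∑ x x', Q x Q x' Z(x,x')^(1/λ))` and `Z ≥ 0` with the
convention `0^(1/λ) = 0`. -/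
theorem Ex_div_two_lam_tendsto {X : Type*} [Fintype X]
    (Q : X → ℝ) (hQ : ∀ x, 0 ≤ Q x) (hQ1 : ∑ x, Q x = 1)
    (Z : X × X → ℝ) (hZ : ∀ p, 0 ≤ Z p) :
    Tendsto (fun lam : ℝ =>
        (-lam * Real.log (∑ x, ∑ x', Q x * Q x' * Z (x, x') ^ (1 / lam))) /
          (2 * lam))
      atTop
      (nhds (-(1/2) *
        Real.log (∑ x, ∑ x', Q x * Q x' * (if 0 < Z (x, x') then (1:ℝ) else 0)))) := by
  set T : ℝ := ∑ x, ∑ x', Q x * Q x' * (if 0 < Z (x, x') then (1:ℝ) else 0) with hTdef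
  set S : ℝ → ℝ := fun lam => ∑ x, ∑ x', Q x * Q x' * Z (x, x') ^ (1 / lam) with hSdef
  have hS : Tendsto S atTop (nhds T) := by
    rw [hSdef, hTdef]
    apply tendsto_finset_sum
    intro x _
    apply tendsto_finset_sum
    intro x' _
    by_cases hz : 0 < Z (x, x')
    · simp only [if_pos hz]
      have h0 : Tendsto (fun lam : ℝ => 1 / lam) atTop (nhds 0) := by
        simpa [one_div] using tendsto_inv_atTop_zero
      have hc : ContinuousAt (fun y : ℝ => Z (x, x') ^ y) 0 :=
        Real.continuousAt_const_rpow hz.ne'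
      have := (hc.tendsto.comp h0)
      rw [Real.rpow_zero] at this
      simpa using (tendsto_const_nhds.mul this)
    · have hz0 : Z (x, x') = 0 := le_antisymm (not_lt.1 hz) (hZ _)
      simp only [if_neg hz, mul_zero]
      apply Tendsto.congr' _ tendsto_const_nhds
      filter_upwards [eventually_gt_atTop (0:ℝ)] with lam hlam
      rw [hz0, Real.zero_rpow (by positivity), mul_zero]
  by_cases hT0 : T = 0
  · have hout := (Finset.sum_eq_zero_iff_of_nonneg (fun x _ =>
        Finset.sum_nonneg fun x' _ => mul_nonneg (mul_nonneg (hQ x) (hQ x'))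
          (by split <;> norm_num))).1 (hTdef.symm.trans hT0)
    have hzero : ∀ x x', Q x * Q x' * (if 0 < Z (x, x') then (1:ℝ) else 0) = 0 := by
      intro x x'
      have hx := (Finset.sum_eq_zero_iff_of_nonneg (fun x' _ =>
        mul_nonneg (mul_nonneg (hQ x) (hQ x')) (by split <;> norm_num))).1
          (hout x (Finset.mem_univ x))
      exact hx x' (Finset.mem_univ x')
    rw [hT0, Real.log_zero, mul_zero]
    apply Tendsto.congr' _ tendsto_const_nhds
    filter_upwards [eventually_gt_atTop (0:ℝ)] with lam hlam
    have hSlam : S lam = 0 := by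
      simp only [hSdef]
      apply Finset.sum_eq_zero; intro x _
      apply Finset.sum_eq_zero; intro x' _
      by_cases hz : 0 < Z (x, x')
      · have h := hzero x x'
        rw [if_pos hz, mul_one] at h
        rw [h, zero_mul]
      · rw [le_antisymm (not_lt.1 hz) (hZ _), Real.zero_rpow (one_div_pos.2 hlam).ne',
          mul_zero]
    show (0:ℝ) = _
    rw [show (∑ x, ∑ x', Q x * Q x' * Z (x, x') ^ (1 / lam)) = S lam from rfl,
      hSlam, Real.log_zero, mul_zero, zero_div]
  · have hTpos : 0 < T := lt_of_le_of_ne (Finset.sum_nonneg fun x _ =>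
      Finset.sum_nonneg fun x' _ => mul_nonneg (mul_nonneg (hQ x) (hQ x'))
        (by split <;> norm_num)) (Ne.symm hT0)
    have hlog : Tendsto (fun lam => Real.log (S lam)) atTop (nhds (Real.log T)) :=
      ((Real.continuousAt_log hT0).tendsto.comp hS)
    have := hlog.const_mul (-(1/2 : ℝ))
    apply Tendsto.congr' _ this
    filter_upwards [eventually_gt_atTop (0:ℝ)] with lam hlam
    field_simp
    ring
end

section
/- Let X be a finite set, let Z : X×X → (0,1], let λ ≥ 1 and n ≥ 1, and for a type Q̂ let T(Q̂) denote its type class in X^n. Then for constant-composition inputs, the bound ∑_{x'∈T(Q̂)} (1/|T(Q̂)|) ∏_i Z(x_i, x'_i)^{1/λ} ≤ (n+1)^{|X|−1} e^{n D(Q̂‖P̄)} ∏_{i=1}^n ∑_{x'} P̄(x') Z(x_i, x')^{1/λ} holds for every x ∈ 𝒳ⁿ of type Q̂ and every pmf P̄ on X with full support. -/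
open Real Finset

namespace PoltyrevAux
open Nat
set_option linter.unusedSectionVars false

variable {X : Type*} [Fintype X] [DecidableEq X] {n : ℕ}

/-- count of `a` in `y` -/
def cnt (y : Fin n → X) (a : X) : ℕ := (Finset.univ.filter (fun i => y i = a)).card

lemma sum_cnt (y : Fin n → X) : ∑ a, cnt y a = n := by
  classical
  have h := Finset.card_eq_sum_card_fiberwise (f := y) (s := Finset.univ) (t := Finset.univ)
    (fun i _ => Finset.mem_univ _)
  have h2 : (Finset.univ : Finset (Fin n)).card = n := by simp
  rw [h2] at h
  exact h.symm

lemma cnt_le (y : Fin n → X) (a : X) : cnt y a ≤ n := by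
  have := Finset.card_filter_le (Finset.univ : Finset (Fin n)) (fun i => y i = a)
  simpa [cnt] using this

lemma prod_comp_cnt {M : Type*} [CommMonoid M] (y : Fin n → X) (g : X → M) :
    ∏ i, g (y i) = ∏ a, g a ^ cnt y a := by
  classical
  rw [← Finset.prod_fiberwise_of_maps_to (g := y) (t := Finset.univ)
    (fun i _ => Finset.mem_univ _) (fun i => g (y i))]
  refine Finset.prod_congr rfl fun a _ => ?_
  rw [Finset.prod_congr rfl (fun i hi => ?_), Finset.prod_const]
  · rfl
  · rw [(Finset.mem_filter.mp hi).2]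

lemma cnt_comp_perm (y : Fin n → X) (σ : Equiv.Perm (Fin n)) (a : X) :
    cnt (y ∘ ⇑σ) a = cnt y a := by
  unfold cnt
  apply Finset.card_bij (fun i _ => σ i)
  · intro i hi
    simp only [Finset.mem_filter, Finset.mem_univ, true_and, Function.comp_apply] at hi ⊢
    exact hi
  · intro i _ j _ h; exact σ.injective h
  · intro j hj
    refine ⟨σ.symm j, ?_, by simp⟩
    simp only [Finset.mem_filter, Finset.mem_univ, true_and, Function.comp_apply] at hj ⊢
    simpa using hj

lemma stab_card (y : Fin n → X) :
    (Finset.univ.filter (fun σ : Equiv.Perm (Fin n) => y ∘ ⇑σ = y)).card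
      = ∏ a, (cnt y a)! := by
  classical
  rw [← Fintype.card_subtype, DomMulAct.stabilizer_card y]
  exact Finset.prod_congr rfl fun a _ => by rw [Fintype.card_subtype]; rfl

lemma exists_perm {y₀ y : Fin n → X} (h : ∀ a, cnt y a = cnt y₀ a) :
    ∃ σ : Equiv.Perm (Fin n), y₀ ∘ ⇑σ = y := by
  classical
  have e : ∀ a, {i // y i = a} ≃ {i // y₀ i = a} := fun a =>
    Fintype.equivOfCardEq (by rw [Fintype.card_subtype, Fintype.card_subtype]; exact h a)
  refine ⟨(Equiv.sigmaFiberEquiv y).symm.trans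
    ((Equiv.sigmaCongrRight e).trans (Equiv.sigmaFiberEquiv y₀)), ?_⟩
  funext i
  exact (e (y i) ⟨i, rfl⟩).2

lemma fiber_card {y₀ y : Fin n → X} (h : ∀ a, cnt y a = cnt y₀ a) :
    (Finset.univ.filter (fun σ : Equiv.Perm (Fin n) => y₀ ∘ ⇑σ = y)).card
      = ∏ a, (cnt y₀ a)! := by
  classical
  obtain ⟨σ₀, hσ₀⟩ := exists_perm h
  rw [← stab_card y₀]
  apply Finset.card_bij (fun σ _ => σ * σ₀⁻¹)
  · intro σ hσ
    simp only [Finset.mem_filter, Finset.mem_univ, true_and] at hσ ⊢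
    funext j
    show y₀ (σ (σ₀⁻¹ j)) = y₀ j
    calc y₀ (σ (σ₀⁻¹ j)) = y (σ₀⁻¹ j) := congrFun hσ _
    _ = y₀ (σ₀ (σ₀⁻¹ j)) := (congrFun hσ₀ _).symm
    _ = y₀ j := by rw [show σ₀ (σ₀⁻¹ j) = j from σ₀.apply_symm_apply j]
  · intro σ _ τ _ hst; exact mul_right_cancel hst
  · intro τ hτ
    simp only [Finset.mem_filter, Finset.mem_univ, true_and] at hτ
    refine ⟨τ * σ₀, ?_, by group⟩
    simp only [Finset.mem_filter, Finset.mem_univ, true_and]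
    funext j
    show y₀ (τ (σ₀ j)) = y j
    calc y₀ (τ (σ₀ j)) = y₀ (σ₀ j) := congrFun hτ _
    _ = y j := congrFun hσ₀ _

lemma typeclass_card (y₀ : Fin n → X) :
    (Finset.univ.filter (fun y : Fin n → X => ∀ a, cnt y a = cnt y₀ a)).card
      * ∏ a, (cnt y₀ a)! = n ! := by
  classical
  set Tm := Finset.univ.filter (fun y : Fin n → X => ∀ a, cnt y a = cnt y₀ a) with hTm
  have h0 : (Finset.univ : Finset (Equiv.Perm (Fin n))).card = n ! := by
    simp [Finset.card_univ, Fintype.card_perm]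
  have h1 : (Finset.univ : Finset (Equiv.Perm (Fin n))).card
      = ∑ y ∈ Tm, (Finset.univ.filter (fun σ : Equiv.Perm (Fin n) => y₀ ∘ ⇑σ = y)).card := by
    apply Finset.card_eq_sum_card_fiberwise (f := fun σ : Equiv.Perm (Fin n) => y₀ ∘ ⇑σ)
    intro σ _
    simp only [hTm, Finset.mem_coe, Finset.mem_filter, Finset.mem_univ, true_and]
    exact fun a => cnt_comp_perm y₀ σ a
  have h2 : ∀ y ∈ Tm,
      (Finset.univ.filter (fun σ : Equiv.Perm (Fin n) => y₀ ∘ ⇑σ = y)).card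
        = ∏ a, (cnt y₀ a)! := by
    intro y hy
    simp only [hTm, Finset.mem_filter, Finset.mem_univ, true_and] at hy
    exact fiber_card hy
  calc Tm.card * ∏ a, (cnt y₀ a)!
      = ∑ _y ∈ Tm, ∏ a, (cnt y₀ a)! := by rw [Finset.sum_const, smul_eq_mul]
  _ = ∑ y ∈ Tm, (Finset.univ.filter (fun σ : Equiv.Perm (Fin n) => y₀ ∘ ⇑σ = y)).card :=
      (Finset.sum_congr rfl h2).symm
  _ = (Finset.univ : Finset (Equiv.Perm (Fin n))).card := h1.symm
  _ = n ! := h0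

lemma pow_mul_factorial_le (k m : ℕ) : k ^ m * k ! ≤ k ^ k * m ! := by
  rcases le_total m k with h | h
  · have h1 : m ! * k.descFactorial (k - m) = k ! := by
      have h2 := Nat.factorial_mul_descFactorial (Nat.sub_le k m)
      rwa [Nat.sub_sub_self h] at h2
    calc k ^ m * k ! = k ^ m * (m ! * k.descFactorial (k - m)) := by rw [h1]
    _ ≤ k ^ m * (m ! * k ^ (k - m)) :=
        Nat.mul_le_mul_left _ (Nat.mul_le_mul_left _ (Nat.descFactorial_le_pow k _))
    _ = k ^ (m + (k - m)) * m ! := by ring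
    _ = k ^ k * m ! := by rw [Nat.add_sub_cancel' h]
  · have h2 : k ! * (k + 1) ^ (m - k) ≤ m ! := by
      have h3 := Nat.factorial_mul_pow_le_factorial (m := k) (n := m - k)
      rwa [Nat.add_sub_cancel' h] at h3
    calc k ^ m * k ! = k ^ (k + (m - k)) * k ! := by rw [Nat.add_sub_cancel' h]
    _ = k ^ k * (k ^ (m - k) * k !) := by ring
    _ ≤ k ^ k * ((k + 1) ^ (m - k) * k !) :=
        Nat.mul_le_mul_left _ (Nat.mul_le_mul_right _ (Nat.pow_le_pow_left (Nat.le_succ k) _))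
    _ = k ^ k * (k ! * (k + 1) ^ (m - k)) := by ring
    _ ≤ k ^ k * m ! := Nat.mul_le_mul_left _ h2

end PoltyrevAux

open PoltyrevAux

/-- Poltyrev's inequality: for a type `Q̂` with denominator `n`, any sequence
`x` of type `Q̂`, any full-support pmf `P̄` and any `λ ≥ 1`, the average over the
type class of `∏ i, Z(x i, x' i)^(1/λ)` is at most
`(n+1)^(|X|-1) e^(n D(Q̂‖P̄)) ∏ i, ∑ b, P̄ b Z(x i, b)^(1/λ)`. -/
theorem poltyrev_bound {X : Type*} [Fintype X] [DecidableEq X]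
    (n : ℕ) (Qhat : X → ℝ) (hQhat : ∀ a, ∃ k : ℕ, Qhat a = (k : ℝ) / n)
    (hQ1 : ∑ a, Qhat a = 1)
    (T : Finset (Fin n → X))
    (hT : T = Finset.univ.filter (fun x : Fin n → X =>
      ∀ a, ((Finset.univ.filter (fun i => x i = a)).card : ℝ) = n * Qhat a))
    (Z : X × X → ℝ) (hZpos : ∀ p, 0 < Z p) (hZle : ∀ p, Z p ≤ 1)
    (Pbar : X → ℝ) (hPpos : ∀ a, 0 < Pbar a) (hP1 : ∑ a, Pbar a = 1)
    (lam : ℝ) (hlam : 1 ≤ lam)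
    (x : Fin n → X) (hx : x ∈ T) :
    ∑ x' ∈ T, (1 / (T.card : ℝ)) * ∏ i, Z (x i, x' i) ^ (1 / lam) ≤
      ((n : ℝ) + 1) ^ (Fintype.card X - 1) *
        Real.exp (n * ∑ a, Qhat a * Real.log (Qhat a / Pbar a)) *
        ∏ i, ∑ b, Pbar b * Z (x i, b) ^ (1 / lam) := by
  classical
  -- n ≠ 0
  have hn : (n : ℝ) ≠ 0 := by
    intro hn0
    have : ∀ a, Qhat a = 0 := by
      intro a; obtain ⟨k, hk⟩ := hQhat a; rw [hk, hn0, div_zero]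
    rw [Finset.sum_congr rfl (fun a _ => this a)] at hQ1
    simp at hQ1
  have hnpos : (0:ℝ) < n := lt_of_le_of_ne (Nat.cast_nonneg n) (Ne.symm hn)
  -- X nonempty
  have hXne : Nonempty X := by
    by_contra h
    rw [not_nonempty_iff] at h
    rw [Finset.univ_eq_empty, Finset.sum_empty] at hQ1
    norm_num at hQ1
  -- counts of x
  have hxmem := hx
  rw [hT] at hxmem
  have hxk : ∀ a, ((cnt x a : ℕ) : ℝ) = n * Qhat a := (Finset.mem_filter.mp hxmem).2
  have hsumk : ∑ a, cnt x a = n := sum_cnt x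
  set q : X → ℝ := fun a => (cnt x a : ℝ) / n with hq
  have hQq : ∀ a, Qhat a = q a := by
    intro a
    rw [hq]; field_simp; rw [hxk a]; ring
  have hq0 : ∀ a, 0 ≤ q a := fun a => div_nonneg (Nat.cast_nonneg _) (le_of_lt hnpos)
  have hsumq : ∑ a, q a = 1 := by
    rw [← hQ1]; exact Finset.sum_congr rfl fun a _ => (hQq a).symm
  -- characterization of T
  have hTeq : T = Finset.univ.filter (fun y : Fin n → X => ∀ a, cnt y a = cnt x a) := by
    rw [hT]
    apply Finset.filter_congr
    intro y _
    constructor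
    · intro h a
      have h2 := h a
      rw [← hxk a] at h2
      exact_mod_cast h2
    · intro h a
      rw [← hxk a]
      exact_mod_cast congrArg Nat.cast (h a)
  have hTcard : T.card * ∏ a, (cnt x a).factorial = n.factorial := by
    rw [hTeq]; exact typeclass_card x
  have hTpos : 0 < (T.card : ℝ) := by
    have : x ∈ T := hx
    have hne : T.Nonempty := ⟨x, this⟩
    exact_mod_cast Finset.card_pos.mpr hne
  set d := Fintype.card X with hd
  -- fibers by count
  set cntF : (Fin n → X) → (X → ℕ) := fun y => fun a => cnt y a with hcntF
  set M : Finset (X → ℕ) := Finset.image cntF Finset.univ with hM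
  -- product formula with sum of exponents = n
  have hq_prod : ∀ (f : X → ℕ), (∑ a, f a = n) →
      ∏ a, q a ^ f a = (∏ a, ((cnt x a : ℕ) : ℝ) ^ f a) / (n:ℝ)^n := by
    intro f hf
    rw [eq_div_iff (pow_ne_zero _ hn)]
    have hnn : ((n:ℝ))^n = ∏ a, ((n:ℝ)) ^ f a := by
      rw [Finset.prod_pow_eq_pow_sum, hf]
    rw [hnn, ← Finset.prod_mul_distrib]
    refine Finset.prod_congr rfl fun a _ => ?_
    rw [hq, ← mul_pow, div_mul_cancel₀ _ hn]
  -- the key nat inequality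
  have hC : ∀ m ∈ M,
      ((Finset.univ.filter (fun y : Fin n → X => cntF y = m)).card : ℝ) * ∏ a, q a ^ m a
        ≤ (T.card : ℝ) * ∏ a, q a ^ cnt x a := by
    intro m hm
    obtain ⟨y₀, _, hy₀⟩ := Finset.mem_image.mp hm
    have hm1 : ∑ a, m a = n := by rw [← hy₀]; exact sum_cnt y₀
    have hfilter : (Finset.univ.filter (fun y : Fin n → X => cntF y = m))
        = (Finset.univ.filter (fun y : Fin n → X => ∀ a, cnt y a = cnt y₀ a)) := by
      apply Finset.filter_congr
      intro y _
      rw [← hy₀, hcntF]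
      simp [funext_iff]
    have hm2 : (Finset.univ.filter (fun y : Fin n → X => cntF y = m)).card
        * ∏ a, (m a).factorial = n.factorial := by
      rw [hfilter, ← hy₀]
      exact typeclass_card y₀
    set fc := (Finset.univ.filter (fun y : Fin n → X => cntF y = m)).card with hfc
    -- nat inequality
    have h5 : (∏ a, (cnt x a) ^ (m a)) * (∏ a, (cnt x a).factorial)
        ≤ (∏ a, (cnt x a) ^ (cnt x a)) * (∏ a, (m a).factorial) := by
      rw [← Finset.prod_mul_distrib, ← Finset.prod_mul_distrib]
      exact Finset.prod_le_prod' fun a _ => pow_mul_factorial_le _ _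
    have hnat : fc * ∏ a, (cnt x a) ^ (m a) ≤ T.card * ∏ a, (cnt x a) ^ (cnt x a) := by
      have hpos : 0 < (∏ a, (m a).factorial) * ∏ a, (cnt x a).factorial :=
        Nat.mul_pos (Finset.prod_pos fun a _ => Nat.factorial_pos _)
          (Finset.prod_pos fun a _ => Nat.factorial_pos _)
      apply Nat.le_of_mul_le_mul_right _ hpos
      calc fc * (∏ a, (cnt x a) ^ (m a)) * ((∏ a, (m a).factorial) * ∏ a, (cnt x a).factorial)
          = (fc * ∏ a, (m a).factorial) * ((∏ a, (cnt x a) ^ (m a)) * ∏ a, (cnt x a).factorial) := by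
            ring
      _ = n.factorial * ((∏ a, (cnt x a) ^ (m a)) * ∏ a, (cnt x a).factorial) := by rw [hm2]
      _ ≤ n.factorial * ((∏ a, (cnt x a) ^ (cnt x a)) * ∏ a, (m a).factorial) :=
          Nat.mul_le_mul_left _ h5
      _ = (T.card * ∏ a, (cnt x a).factorial) * ((∏ a, (cnt x a) ^ (cnt x a)) * ∏ a, (m a).factorial) := by
          rw [hTcard]
      _ = T.card * (∏ a, (cnt x a) ^ (cnt x a)) * ((∏ a, (m a).factorial) * ∏ a, (cnt x a).factorial) := by
          ring
    rw [hq_prod m hm1, hq_prod (fun a => cnt x a) hsumk]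
    rw [← mul_div_assoc, ← mul_div_assoc]
    rw [div_le_div_iff_of_pos_right (by positivity : (0:ℝ) < (n:ℝ)^n)]
    exact_mod_cast hnat
  -- card bound on M
  have hMcard : (M.card : ℝ) ≤ ((n:ℝ) + 1) ^ (d - 1) := by
    obtain ⟨a₀⟩ := hXne
    have hinj : M.card ≤ Fintype.card ({a : X // a ≠ a₀} → Fin (n+1)) := by
      rw [← Finset.card_univ]
      apply Finset.card_le_card_of_injOn
        (fun m => fun a => (⟨min (m a.1) n, by omega⟩ : Fin (n+1)))
        (fun m _ => Finset.mem_univ _)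
      intro m₁ hm₁ m₂ hm₂ h
      rw [hM] at hm₁ hm₂
      simp only [Finset.coe_image, Set.mem_image, Finset.coe_univ, Set.mem_univ,
        true_and] at hm₁ hm₂
      obtain ⟨y₁, _, rfl⟩ := hm₁
      obtain ⟨y₂, _, rfl⟩ := hm₂
      have hne : ∀ a, a ≠ a₀ → cnt y₁ a = cnt y₂ a := by
        intro a ha
        have h2 := congrFun h ⟨a, ha⟩
        simp only [Fin.mk.injEq] at h2
        rw [Nat.min_eq_left (cnt_le y₁ a), Nat.min_eq_left (cnt_le y₂ a)] at h2
        exact h2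
      have hsum : ∑ a, cnt y₁ a = ∑ a, cnt y₂ a := by
        rw [sum_cnt, sum_cnt]
      rw [← Finset.add_sum_erase _ _ (Finset.mem_univ a₀),
          ← Finset.add_sum_erase _ _ (Finset.mem_univ a₀)] at hsum
      have herase : ∑ a ∈ Finset.univ.erase a₀, cnt y₁ a = ∑ a ∈ Finset.univ.erase a₀, cnt y₂ a :=
        Finset.sum_congr rfl fun a ha => hne a (Finset.mem_erase.mp ha).1
      have ha₀ : cnt y₁ a₀ = cnt y₂ a₀ := by omega
      funext a
      by_cases hc : a = a₀
      · rw [hc]; exact ha₀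
      · exact hne a hc
    have hcard2 : Fintype.card ({a : X // a ≠ a₀} → Fin (n+1)) = (n+1) ^ (d - 1) := by
      rw [Fintype.card_fun, Fintype.card_fin]
      congr 1
      have : Fintype.card {a : X // a ≠ a₀} = d - 1 := by
        rw [hd]
        have := Fintype.card_subtype_compl (fun a : X => a = a₀)
        rw [Fintype.card_subtype_eq] at this
        exact this
      rw [this]
    have : M.card ≤ (n+1) ^ (d-1) := by rw [← hcard2]; exact hinj
    calc (M.card : ℝ) ≤ ((n+1 : ℕ) : ℝ) ^ (d-1) := by exact_mod_cast this
    _ = ((n:ℝ) + 1) ^ (d-1) := by push_cast; ring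
  -- the main counting bound
  have hprodq0 : (0:ℝ) ≤ (T.card : ℝ) * ∏ a, q a ^ cnt x a :=
    mul_nonneg (le_of_lt hTpos) (Finset.prod_nonneg fun a _ => pow_nonneg (hq0 a) _)
  have hB : (1:ℝ) ≤ ((n:ℝ) + 1) ^ (d - 1) * ((T.card : ℝ) * ∏ a, q a ^ cnt x a) := by
    have h1 : (1:ℝ) = ∑ y : Fin n → X, ∏ i, q (y i) := by
      calc (1:ℝ) = ∏ _i : Fin n, ∑ b, q b := by rw [hsumq]; simp
      _ = ∑ y : Fin n → X, ∏ i, q (y i) := Fintype.prod_sum _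
    have h2 : ∑ y : Fin n → X, ∏ i, q (y i)
        = ∑ m ∈ M, ∑ y ∈ Finset.univ.filter (fun y => cntF y = m), ∏ a, q a ^ cnt y a := by
      rw [Finset.sum_fiberwise_of_maps_to (fun y _ => Finset.mem_image_of_mem cntF (Finset.mem_univ y))]
      exact Finset.sum_congr rfl fun y _ => prod_comp_cnt y q
    have h3 : ∀ m ∈ M, ∑ y ∈ Finset.univ.filter (fun y => cntF y = m), ∏ a, q a ^ cnt y a
        = ((Finset.univ.filter (fun y : Fin n → X => cntF y = m)).card : ℝ) * ∏ a, q a ^ m a := by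
      intro m _
      have hconst : ∀ y ∈ Finset.univ.filter (fun y : Fin n → X => cntF y = m),
          (∏ a, q a ^ cnt y a) = ∏ a, q a ^ m a := by
        intro y hy
        have hy2 : cntF y = m := (Finset.mem_filter.mp hy).2
        exact Finset.prod_congr rfl fun a _ => by rw [← hy2]
      rw [Finset.sum_congr rfl hconst, Finset.sum_const, nsmul_eq_mul]
    calc (1:ℝ) = ∑ y : Fin n → X, ∏ i, q (y i) := h1
    _ = ∑ m ∈ M, ∑ y ∈ Finset.univ.filter (fun y => cntF y = m), ∏ a, q a ^ cnt y a := h2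
    _ = ∑ m ∈ M, ((Finset.univ.filter (fun y : Fin n → X => cntF y = m)).card : ℝ) * ∏ a, q a ^ m a :=
        Finset.sum_congr rfl h3
    _ ≤ ∑ _m ∈ M, (T.card : ℝ) * ∏ a, q a ^ cnt x a := Finset.sum_le_sum hC
    _ = (M.card : ℝ) * ((T.card : ℝ) * ∏ a, q a ^ cnt x a) := by
        rw [Finset.sum_const, nsmul_eq_mul]
    _ ≤ ((n:ℝ) + 1) ^ (d - 1) * ((T.card : ℝ) * ∏ a, q a ^ cnt x a) :=
        mul_le_mul_of_nonneg_right hMcard hprodq0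
  -- the exponential identity
  have hexp : Real.exp ((n:ℝ) * ∑ a, Qhat a * Real.log (Qhat a / Pbar a)) * ∏ a, Pbar a ^ cnt x a
      = ∏ a, q a ^ cnt x a := by
    have h1 : (n:ℝ) * ∑ a, Qhat a * Real.log (Qhat a / Pbar a)
        = ∑ a, ((cnt x a : ℕ) : ℝ) * Real.log (q a / Pbar a) := by
      rw [Finset.mul_sum]
      refine Finset.sum_congr rfl fun a _ => ?_
      rw [hQq a]
      have : (n:ℝ) * (q a * Real.log (q a / Pbar a)) = ((n:ℝ) * q a) * Real.log (q a / Pbar a) := by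
        ring
      rw [this]
      congr 1
      rw [hq]; field_simp
    rw [h1, Real.exp_sum, ← Finset.prod_mul_distrib]
    refine Finset.prod_congr rfl fun a _ => ?_
    by_cases hk : cnt x a = 0
    · simp [hk]
    · have hqa : 0 < q a := by
        rw [hq]
        exact div_pos (by exact_mod_cast Nat.pos_of_ne_zero hk) hnpos
      have hr : 0 < q a / Pbar a := div_pos hqa (hPpos a)
      rw [Real.exp_nat_mul, Real.exp_log hr, ← mul_pow, div_mul_cancel₀ _ (ne_of_gt (hPpos a))]
  -- per-element key inequality
  have hcnt' : ∀ x' ∈ T, ∀ a, cnt x' a = cnt x a := by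
    intro x' hx' a
    rw [hTeq] at hx'
    exact (Finset.mem_filter.mp hx').2 a
  set C1 : ℝ := ((n : ℝ) + 1) ^ (d - 1) *
      Real.exp (n * ∑ a, Qhat a * Real.log (Qhat a / Pbar a)) with hC1
  have hC1nn : 0 ≤ C1 := by
    rw [hC1]; positivity
  have hkey : ∀ x' ∈ T, (1 / (T.card : ℝ)) * ∏ i, Z (x i, x' i) ^ (1 / lam)
      ≤ C1 * ∏ i, (Pbar (x' i) * Z (x i, x' i) ^ (1 / lam)) := by
    intro x' hx'
    have hZn : 0 ≤ ∏ i, Z (x i, x' i) ^ (1 / lam) :=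
      Finset.prod_nonneg fun i _ => Real.rpow_nonneg (le_of_lt (hZpos _)) _
    have hPx' : ∏ i, Pbar (x' i) = ∏ a, Pbar a ^ cnt x a := by
      rw [prod_comp_cnt x' Pbar]
      exact Finset.prod_congr rfl fun a _ => by rw [hcnt' x' hx' a]
    have hsplit : ∏ i, (Pbar (x' i) * Z (x i, x' i) ^ (1 / lam))
        = (∏ a, Pbar a ^ cnt x a) * ∏ i, Z (x i, x' i) ^ (1 / lam) := by
      rw [Finset.prod_mul_distrib, hPx']
    rw [hsplit, ← mul_assoc]
    apply mul_le_mul_of_nonneg_right _ hZn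
    rw [div_le_iff₀ hTpos]
    calc (1:ℝ) ≤ ((n:ℝ) + 1) ^ (d - 1) * ((T.card : ℝ) * ∏ a, q a ^ cnt x a) := hB
    _ = ((n:ℝ) + 1) ^ (d - 1) * ((T.card : ℝ) * (Real.exp ((n:ℝ) * ∑ a, Qhat a * Real.log (Qhat a / Pbar a)) * ∏ a, Pbar a ^ cnt x a)) := by
        rw [hexp]
    _ = C1 * (∏ a, Pbar a ^ cnt x a) * (T.card : ℝ) := by rw [hC1]; ring
  -- assemble
  have hterm_nn : ∀ x' : Fin n → X, 0 ≤ C1 * ∏ i, (Pbar (x' i) * Z (x i, x' i) ^ (1 / lam)) := by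
    intro x'
    apply mul_nonneg hC1nn
    exact Finset.prod_nonneg fun i _ =>
      mul_nonneg (le_of_lt (hPpos _)) (Real.rpow_nonneg (le_of_lt (hZpos _)) _)
  calc ∑ x' ∈ T, (1 / (T.card : ℝ)) * ∏ i, Z (x i, x' i) ^ (1 / lam)
      ≤ ∑ x' ∈ T, C1 * ∏ i, (Pbar (x' i) * Z (x i, x' i) ^ (1 / lam)) :=
        Finset.sum_le_sum hkey
  _ ≤ ∑ x' : Fin n → X, C1 * ∏ i, (Pbar (x' i) * Z (x i, x' i) ^ (1 / lam)) :=
        Finset.sum_le_sum_of_subset_of_nonneg (Finset.subset_univ T)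
          (fun y _ _ => hterm_nn y)
  _ = C1 * ∑ x' : Fin n → X, ∏ i, (Pbar (x' i) * Z (x i, x' i) ^ (1 / lam)) := by
        rw [Finset.mul_sum]
  _ = C1 * ∏ i, ∑ b, Pbar b * Z (x i, b) ^ (1 / lam) := by
        rw [Fintype.prod_sum (f := fun i b => Pbar b * Z (x i, b) ^ (1 / lam))]
  _ = ((n : ℝ) + 1) ^ (Fintype.card X - 1) *
        Real.exp (n * ∑ a, Qhat a * Real.log (Qhat a / Pbar a)) *
        ∏ i, ∑ b, Pbar b * Z (x i, b) ^ (1 / lam) := by rw [hC1, hd]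
end

section
/- Superadditivity of the finite-state expurgated function: for a finite-state channel with state recursion W^n(y|x,s₀) = ∑_{s_k} W^k(y₁,s_k|x₁,s₀) W^l(y₂|x₂,s_k) (n = k + l, x = (x₁,x₂), y = (y₁,y₂)) and product input distribution Qⁿ(x) = Q^k(x₁) Q^l(x₂), the function F_x^n(λ,Qⁿ) = −(1/n) log( ∑_{x,x'} Qⁿ(x)Qⁿ(x') ( ∑_y √( ∑_{s₀} Wⁿ(y|x,s₀) · ∑_{s₀'} Wⁿ(y|x',s₀') ) )^{1/λ} )^λ satisfies n·F_x^n(λ,Qⁿ) ≥ k·F_x^k(λ,Q^k) + l·F_x^l(λ,Q^l) for all λ ≥ 1. -/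
open Real Finset

lemma prod_sum_factor_aux {α β : Type*} [Fintype α] [Fintype β]
    (q : α → ℝ) (r : β → ℝ) (g : α → α → ℝ) (h : β → β → ℝ) :
    ∑ x : α × β, ∑ x' : α × β,
      (q x.1 * r x.2) * (q x'.1 * r x'.2) * (g x.1 x'.1 * h x.2 x'.2)
      = (∑ a, ∑ a', q a * q a' * g a a') * (∑ b, ∑ b', r b * r b' * h b b') := by
  rw [Finset.sum_mul_sum]
  simp only [Fintype.sum_prod_type]
  refine Finset.sum_congr rfl fun a _ => Finset.sum_congr rfl fun b _ => ?_
  rw [Finset.sum_mul]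
  refine Finset.sum_congr rfl fun a' _ => ?_
  rw [Finset.mul_sum]
  refine Finset.sum_congr rfl fun b' _ => ?_
  ring

lemma exists_pos_of_sum_pos_aux {ι : Type*} [Fintype ι] {f : ι → ℝ}
    (h : 0 < ∑ i, f i) : ∃ i, 0 < f i := by
  by_contra hc
  push_neg at hc
  have : (∑ i, f i) ≤ 0 := Finset.sum_nonpos fun i _ => hc i
  linarith

/-- Superadditivity of the finite-state expurgated function (Lemma 2 of the
paper): with the state recursion
`Wⁿ(y|x,s₀) = ∑_{s_k} W^k(y₁,s_k|x₁,s₀) W^l(y₂|x₂,s_k)` (`n = k + l`) and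
product input distribution `Qⁿ = Q^k ⊗ Q^l`,
`n F_x^n(λ,Qⁿ) ≥ k F_x^k(λ,Q^k) + l F_x^l(λ,Q^l)`, i.e.
`-λ log Sumₙ ≥ -λ log Sum_k - λ log Sum_l` for all `λ ≥ 1`. -/
theorem finite_state_Fx_superadditive
    {𝒳 𝒴 S : Type*} [Fintype 𝒳] [Fintype 𝒴] [Fintype S] [Nonempty S]
    (k l : ℕ)
    (Wk : (Fin k → 𝒴) → S → (Fin k → 𝒳) → S → ℝ)
    (Wl : (Fin l → 𝒴) → (Fin l → 𝒳) → S → ℝ)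
    (hWk0 : ∀ y₁ sk x₁ s₀, 0 ≤ Wk y₁ sk x₁ s₀)
    (hWl0 : ∀ y₂ x₂ sk, 0 ≤ Wl y₂ x₂ sk)
    (hWk1 : ∀ x₁ s₀, ∑ y₁, ∑ sk, Wk y₁ sk x₁ s₀ = 1)
    (hWl1 : ∀ x₂ sk, ∑ y₂, Wl y₂ x₂ sk = 1)
    (Qk : (Fin k → 𝒳) → ℝ) (Ql : (Fin l → 𝒳) → ℝ)
    (hQk0 : ∀ x₁, 0 ≤ Qk x₁) (hQl0 : ∀ x₂, 0 ≤ Ql x₂)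
    (hQk1 : ∑ x₁, Qk x₁ = 1) (hQl1 : ∑ x₂, Ql x₂ = 1)
    (lam : ℝ) (hlam : 1 ≤ lam) :
    -lam * Real.log (∑ x : (Fin k → 𝒳) × (Fin l → 𝒳),
        ∑ x' : (Fin k → 𝒳) × (Fin l → 𝒳),
        (Qk x.1 * Ql x.2) * (Qk x'.1 * Ql x'.2) *
          (∑ y : (Fin k → 𝒴) × (Fin l → 𝒴),
            Real.sqrt ((∑ s₀, ∑ sk, Wk y.1 sk x.1 s₀ * Wl y.2 x.2 sk) *
              (∑ s₀', ∑ sk', Wk y.1 sk' x'.1 s₀' * Wl y.2 x'.2 sk'))) ^ (1 / lam)) ≥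
      (-lam * Real.log (∑ x₁, ∑ x₁',
          Qk x₁ * Qk x₁' *
            (∑ y₁, Real.sqrt ((∑ s₀, ∑ sk, Wk y₁ sk x₁ s₀) *
              (∑ s₀', ∑ sk', Wk y₁ sk' x₁' s₀'))) ^ (1 / lam))) +
      (-lam * Real.log (∑ x₂, ∑ x₂',
          Ql x₂ * Ql x₂' *
            (∑ y₂, Real.sqrt ((∑ sk, Wl y₂ x₂ sk) *
              (∑ sk', Wl y₂ x₂' sk'))) ^ (1 / lam))) := by
  classical
  have hlam0 : (0:ℝ) < lam := lt_of_lt_of_le one_pos hlam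
  have hinv0 : (0:ℝ) ≤ 1 / lam := by positivity
  -- nonnegativity of the basic channel sums
  have hPk0 : ∀ (y₁ : Fin k → 𝒴) (x₁ : Fin k → 𝒳), 0 ≤ ∑ s₀, ∑ sk, Wk y₁ sk x₁ s₀ :=
    fun y₁ x₁ => Finset.sum_nonneg fun _ _ => Finset.sum_nonneg fun _ _ => hWk0 _ _ _ _
  have hPl0 : ∀ (y₂ : Fin l → 𝒴) (x₂ : Fin l → 𝒳), 0 ≤ ∑ sk, Wl y₂ x₂ sk :=
    fun y₂ x₂ => Finset.sum_nonneg fun _ _ => hWl0 _ _ _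
  have hA0 : ∀ (x : (Fin k → 𝒳) × (Fin l → 𝒳)) (y : (Fin k → 𝒴) × (Fin l → 𝒴)),
      0 ≤ ∑ s₀, ∑ sk, Wk y.1 sk x.1 s₀ * Wl y.2 x.2 sk :=
    fun x y => Finset.sum_nonneg fun _ _ => Finset.sum_nonneg fun _ _ =>
      mul_nonneg (hWk0 _ _ _ _) (hWl0 _ _ _)
  -- the key pointwise bound  A(x,y) ≤ Pk(y₁,x₁) * Pl(y₂,x₂)
  have hAle : ∀ (x : (Fin k → 𝒳) × (Fin l → 𝒳)) (y : (Fin k → 𝒴) × (Fin l → 𝒴)),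
      (∑ s₀, ∑ sk, Wk y.1 sk x.1 s₀ * Wl y.2 x.2 sk) ≤
        (∑ s₀, ∑ sk, Wk y.1 sk x.1 s₀) * (∑ sk, Wl y.2 x.2 sk) := by
    intro x y
    rw [Finset.sum_mul]
    refine Finset.sum_le_sum fun s₀ _ => ?_
    rw [Finset.sum_mul]
    refine Finset.sum_le_sum fun sk _ => ?_
    exact mul_le_mul_of_nonneg_left
      (Finset.single_le_sum (f := fun s => Wl y.2 x.2 s) (fun s _ => hWl0 _ _ _)
        (Finset.mem_univ sk)) (hWk0 _ _ _ _)
  -- nonnegativity of the Bhattacharyya sums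
  have hZk0 : ∀ (x₁ x₁' : Fin k → 𝒳),
      0 ≤ ∑ y₁, Real.sqrt ((∑ s₀, ∑ sk, Wk y₁ sk x₁ s₀) *
        (∑ s₀', ∑ sk', Wk y₁ sk' x₁' s₀')) :=
    fun _ _ => Finset.sum_nonneg fun _ _ => Real.sqrt_nonneg _
  have hZl0 : ∀ (x₂ x₂' : Fin l → 𝒳),
      0 ≤ ∑ y₂, Real.sqrt ((∑ sk, Wl y₂ x₂ sk) * (∑ sk', Wl y₂ x₂' sk')) :=
    fun _ _ => Finset.sum_nonneg fun _ _ => Real.sqrt_nonneg _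
  have hZn0 : ∀ (x x' : (Fin k → 𝒳) × (Fin l → 𝒳)),
      0 ≤ ∑ y : (Fin k → 𝒴) × (Fin l → 𝒴),
        Real.sqrt ((∑ s₀, ∑ sk, Wk y.1 sk x.1 s₀ * Wl y.2 x.2 sk) *
          (∑ s₀', ∑ sk', Wk y.1 sk' x'.1 s₀' * Wl y.2 x'.2 sk')) :=
    fun _ _ => Finset.sum_nonneg fun _ _ => Real.sqrt_nonneg _
  -- Zn(x,x') ≤ Zk(x₁,x₁') * Zl(x₂,x₂')
  have hZle : ∀ (x x' : (Fin k → 𝒳) × (Fin l → 𝒳)),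
      (∑ y : (Fin k → 𝒴) × (Fin l → 𝒴),
        Real.sqrt ((∑ s₀, ∑ sk, Wk y.1 sk x.1 s₀ * Wl y.2 x.2 sk) *
          (∑ s₀', ∑ sk', Wk y.1 sk' x'.1 s₀' * Wl y.2 x'.2 sk'))) ≤
      (∑ y₁, Real.sqrt ((∑ s₀, ∑ sk, Wk y₁ sk x.1 s₀) *
          (∑ s₀', ∑ sk', Wk y₁ sk' x'.1 s₀'))) *
      (∑ y₂, Real.sqrt ((∑ sk, Wl y₂ x.2 sk) * (∑ sk', Wl y₂ x'.2 sk'))) := by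
    intro x x'
    calc (∑ y : (Fin k → 𝒴) × (Fin l → 𝒴),
        Real.sqrt ((∑ s₀, ∑ sk, Wk y.1 sk x.1 s₀ * Wl y.2 x.2 sk) *
          (∑ s₀', ∑ sk', Wk y.1 sk' x'.1 s₀' * Wl y.2 x'.2 sk')))
        ≤ ∑ y : (Fin k → 𝒴) × (Fin l → 𝒴),
            Real.sqrt ((∑ s₀, ∑ sk, Wk y.1 sk x.1 s₀) *
              (∑ s₀', ∑ sk', Wk y.1 sk' x'.1 s₀')) *
            Real.sqrt ((∑ sk, Wl y.2 x.2 sk) * (∑ sk', Wl y.2 x'.2 sk')) := by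
          refine Finset.sum_le_sum fun y _ => ?_
          have hle : (∑ s₀, ∑ sk, Wk y.1 sk x.1 s₀ * Wl y.2 x.2 sk) *
              (∑ s₀', ∑ sk', Wk y.1 sk' x'.1 s₀' * Wl y.2 x'.2 sk') ≤
              ((∑ s₀, ∑ sk, Wk y.1 sk x.1 s₀) * (∑ sk, Wl y.2 x.2 sk)) *
              ((∑ s₀', ∑ sk', Wk y.1 sk' x'.1 s₀') * (∑ sk', Wl y.2 x'.2 sk')) :=
            mul_le_mul (hAle x y) (hAle x' y) (hA0 x' y)
              (mul_nonneg (hPk0 _ _) (hPl0 _ _))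
          calc Real.sqrt ((∑ s₀, ∑ sk, Wk y.1 sk x.1 s₀ * Wl y.2 x.2 sk) *
                (∑ s₀', ∑ sk', Wk y.1 sk' x'.1 s₀' * Wl y.2 x'.2 sk'))
              ≤ Real.sqrt (((∑ s₀, ∑ sk, Wk y.1 sk x.1 s₀) * (∑ sk, Wl y.2 x.2 sk)) *
                ((∑ s₀', ∑ sk', Wk y.1 sk' x'.1 s₀') * (∑ sk', Wl y.2 x'.2 sk'))) :=
                Real.sqrt_le_sqrt hle
            _ = Real.sqrt (((∑ s₀, ∑ sk, Wk y.1 sk x.1 s₀) *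
                  (∑ s₀', ∑ sk', Wk y.1 sk' x'.1 s₀')) *
                  ((∑ sk, Wl y.2 x.2 sk) * (∑ sk', Wl y.2 x'.2 sk'))) := by
                congr 1; ring
            _ = Real.sqrt ((∑ s₀, ∑ sk, Wk y.1 sk x.1 s₀) *
                  (∑ s₀', ∑ sk', Wk y.1 sk' x'.1 s₀')) *
                Real.sqrt ((∑ sk, Wl y.2 x.2 sk) * (∑ sk', Wl y.2 x'.2 sk')) :=
                Real.sqrt_mul (mul_nonneg (hPk0 _ _) (hPk0 _ _)) _
      _ = (∑ y₁, Real.sqrt ((∑ s₀, ∑ sk, Wk y₁ sk x.1 s₀) *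
              (∑ s₀', ∑ sk', Wk y₁ sk' x'.1 s₀'))) *
          (∑ y₂, Real.sqrt ((∑ sk, Wl y₂ x.2 sk) * (∑ sk', Wl y₂ x'.2 sk'))) := by
          rw [Finset.sum_mul_sum, Fintype.sum_prod_type]
  -- per-term rpow bound
  have hterm : ∀ (x x' : (Fin k → 𝒳) × (Fin l → 𝒳)),
      (∑ y : (Fin k → 𝒴) × (Fin l → 𝒴),
        Real.sqrt ((∑ s₀, ∑ sk, Wk y.1 sk x.1 s₀ * Wl y.2 x.2 sk) *
          (∑ s₀', ∑ sk', Wk y.1 sk' x'.1 s₀' * Wl y.2 x'.2 sk'))) ^ (1 / lam) ≤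
      (∑ y₁, Real.sqrt ((∑ s₀, ∑ sk, Wk y₁ sk x.1 s₀) *
          (∑ s₀', ∑ sk', Wk y₁ sk' x'.1 s₀'))) ^ (1 / lam) *
      (∑ y₂, Real.sqrt ((∑ sk, Wl y₂ x.2 sk) * (∑ sk', Wl y₂ x'.2 sk'))) ^ (1 / lam) := by
    intro x x'
    rw [← Real.mul_rpow (hZk0 _ _) (hZl0 _ _)]
    exact Real.rpow_le_rpow (hZn0 x x') (hZle x x') hinv0
  -- the main sum bound
  have key : (∑ x : (Fin k → 𝒳) × (Fin l → 𝒳),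
        ∑ x' : (Fin k → 𝒳) × (Fin l → 𝒳),
        (Qk x.1 * Ql x.2) * (Qk x'.1 * Ql x'.2) *
          (∑ y : (Fin k → 𝒴) × (Fin l → 𝒴),
            Real.sqrt ((∑ s₀, ∑ sk, Wk y.1 sk x.1 s₀ * Wl y.2 x.2 sk) *
              (∑ s₀', ∑ sk', Wk y.1 sk' x'.1 s₀' * Wl y.2 x'.2 sk'))) ^ (1 / lam)) ≤
      (∑ x₁, ∑ x₁', Qk x₁ * Qk x₁' *
            (∑ y₁, Real.sqrt ((∑ s₀, ∑ sk, Wk y₁ sk x₁ s₀) *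
              (∑ s₀', ∑ sk', Wk y₁ sk' x₁' s₀'))) ^ (1 / lam)) *
      (∑ x₂, ∑ x₂', Ql x₂ * Ql x₂' *
            (∑ y₂, Real.sqrt ((∑ sk, Wl y₂ x₂ sk) *
              (∑ sk', Wl y₂ x₂' sk'))) ^ (1 / lam)) := by
    rw [← prod_sum_factor_aux Qk Ql
      (fun x₁ x₁' => (∑ y₁, Real.sqrt ((∑ s₀, ∑ sk, Wk y₁ sk x₁ s₀) *
        (∑ s₀', ∑ sk', Wk y₁ sk' x₁' s₀'))) ^ (1 / lam))
      (fun x₂ x₂' => (∑ y₂, Real.sqrt ((∑ sk, Wl y₂ x₂ sk) *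
        (∑ sk', Wl y₂ x₂' sk'))) ^ (1 / lam))]
    refine Finset.sum_le_sum fun x _ => Finset.sum_le_sum fun x' _ => ?_
    exact mul_le_mul_of_nonneg_left (hterm x x')
      (mul_nonneg (mul_nonneg (hQk0 _) (hQl0 _)) (mul_nonneg (hQk0 _) (hQl0 _)))
  -- positivity of the three sums
  obtain ⟨a, ha⟩ := exists_pos_of_sum_pos_aux (f := Qk) (by rw [hQk1]; norm_num)
  obtain ⟨b, hb⟩ := exists_pos_of_sum_pos_aux (f := Ql) (by rw [hQl1]; norm_num)
  obtain ⟨s⟩ := (inferInstance : Nonempty S)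
  -- a positive output for the k-block channel
  obtain ⟨ya, hya⟩ := exists_pos_of_sum_pos_aux
    (f := fun y₁ => ∑ sk, Wk y₁ sk a s) (by rw [hWk1]; norm_num)
  obtain ⟨sa, hsa⟩ := exists_pos_of_sum_pos_aux (f := fun sk => Wk ya sk a s) hya
  -- a positive output for the l-block channel (started from state sa)
  obtain ⟨yb, hyb⟩ := exists_pos_of_sum_pos_aux
    (f := fun y₂ => Wl y₂ b sa) (by rw [hWl1]; norm_num)
  have hPka : 0 < ∑ s₀, ∑ sk, Wk ya sk a s₀ :=
    lt_of_lt_of_le hya (Finset.single_le_sum (f := fun s₀ => ∑ sk, Wk ya sk a s₀)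
      (fun s' _ => Finset.sum_nonneg fun _ _ => hWk0 _ _ _ _) (Finset.mem_univ s))
  have hPlb : 0 < ∑ sk, Wl yb b sk :=
    lt_of_lt_of_le hyb (Finset.single_le_sum (f := fun sk => Wl yb b sk)
      (fun _ _ => hWl0 _ _ _) (Finset.mem_univ sa))
  have hAab : 0 < ∑ s₀, ∑ sk, Wk ya sk a s₀ * Wl yb b sk := by
    have h1 : (0:ℝ) < ∑ sk, Wk ya sk a s * Wl yb b sk :=
      lt_of_lt_of_le (mul_pos hsa hyb)
        (Finset.single_le_sum (f := fun sk => Wk ya sk a s * Wl yb b sk)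
          (fun sk _ => mul_nonneg (hWk0 _ _ _ _) (hWl0 _ _ _))
          (Finset.mem_univ sa))
    exact lt_of_lt_of_le h1 (Finset.single_le_sum
      (f := fun s₀ => ∑ sk, Wk ya sk a s₀ * Wl yb b sk)
      (fun s' _ => Finset.sum_nonneg fun sk _ => mul_nonneg (hWk0 _ _ _ _) (hWl0 _ _ _))
      (Finset.mem_univ s))
  have hSk_pos : 0 < ∑ x₁, ∑ x₁', Qk x₁ * Qk x₁' *
      (∑ y₁, Real.sqrt ((∑ s₀, ∑ sk, Wk y₁ sk x₁ s₀) *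
        (∑ s₀', ∑ sk', Wk y₁ sk' x₁' s₀'))) ^ (1 / lam) := by
    have hZ : 0 < ∑ y₁, Real.sqrt ((∑ s₀, ∑ sk, Wk y₁ sk a s₀) *
        (∑ s₀', ∑ sk', Wk y₁ sk' a s₀')) :=
      Finset.sum_pos' (fun _ _ => Real.sqrt_nonneg _)
        ⟨ya, Finset.mem_univ ya, Real.sqrt_pos.2 (mul_pos hPka hPka)⟩
    refine Finset.sum_pos' (fun x₁ _ => Finset.sum_nonneg fun x₁' _ =>
        mul_nonneg (mul_nonneg (hQk0 _) (hQk0 _)) (Real.rpow_nonneg (hZk0 _ _) _))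
      ⟨a, Finset.mem_univ a, ?_⟩
    refine Finset.sum_pos' (fun x₁' _ =>
        mul_nonneg (mul_nonneg (hQk0 _) (hQk0 _)) (Real.rpow_nonneg (hZk0 _ _) _))
      ⟨a, Finset.mem_univ a, ?_⟩
    exact mul_pos (mul_pos ha ha) (Real.rpow_pos_of_pos hZ _)
  have hSl_pos : 0 < ∑ x₂, ∑ x₂', Ql x₂ * Ql x₂' *
      (∑ y₂, Real.sqrt ((∑ sk, Wl y₂ x₂ sk) *
        (∑ sk', Wl y₂ x₂' sk'))) ^ (1 / lam) := by
    have hZ : 0 < ∑ y₂, Real.sqrt ((∑ sk, Wl y₂ b sk) * (∑ sk', Wl y₂ b sk')) :=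
      Finset.sum_pos' (fun _ _ => Real.sqrt_nonneg _)
        ⟨yb, Finset.mem_univ yb, Real.sqrt_pos.2 (mul_pos hPlb hPlb)⟩
    refine Finset.sum_pos' (fun x₂ _ => Finset.sum_nonneg fun x₂' _ =>
        mul_nonneg (mul_nonneg (hQl0 _) (hQl0 _)) (Real.rpow_nonneg (hZl0 _ _) _))
      ⟨b, Finset.mem_univ b, ?_⟩
    refine Finset.sum_pos' (fun x₂' _ =>
        mul_nonneg (mul_nonneg (hQl0 _) (hQl0 _)) (Real.rpow_nonneg (hZl0 _ _) _))
      ⟨b, Finset.mem_univ b, ?_⟩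
    exact mul_pos (mul_pos hb hb) (Real.rpow_pos_of_pos hZ _)
  have hSn_pos : 0 < ∑ x : (Fin k → 𝒳) × (Fin l → 𝒳),
      ∑ x' : (Fin k → 𝒳) × (Fin l → 𝒳),
      (Qk x.1 * Ql x.2) * (Qk x'.1 * Ql x'.2) *
        (∑ y : (Fin k → 𝒴) × (Fin l → 𝒴),
          Real.sqrt ((∑ s₀, ∑ sk, Wk y.1 sk x.1 s₀ * Wl y.2 x.2 sk) *
            (∑ s₀', ∑ sk', Wk y.1 sk' x'.1 s₀' * Wl y.2 x'.2 sk'))) ^ (1 / lam) := by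
    have hZ : 0 < ∑ y : (Fin k → 𝒴) × (Fin l → 𝒴),
        Real.sqrt ((∑ s₀, ∑ sk, Wk y.1 sk a s₀ * Wl y.2 b sk) *
          (∑ s₀', ∑ sk', Wk y.1 sk' a s₀' * Wl y.2 b sk')) :=
      Finset.sum_pos' (fun _ _ => Real.sqrt_nonneg _)
        ⟨(ya, yb), Finset.mem_univ _, Real.sqrt_pos.2 (mul_pos hAab hAab)⟩
    refine Finset.sum_pos' (fun x _ => Finset.sum_nonneg fun x' _ =>
        mul_nonneg (mul_nonneg (mul_nonneg (hQk0 _) (hQl0 _))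
          (mul_nonneg (hQk0 _) (hQl0 _))) (Real.rpow_nonneg (hZn0 _ _) _))
      ⟨(a, b), Finset.mem_univ _, ?_⟩
    refine Finset.sum_pos' (fun x' _ =>
        mul_nonneg (mul_nonneg (mul_nonneg (hQk0 _) (hQl0 _))
          (mul_nonneg (hQk0 _) (hQl0 _))) (Real.rpow_nonneg (hZn0 _ _) _))
      ⟨(a, b), Finset.mem_univ _, ?_⟩
    exact mul_pos (mul_pos (mul_pos ha hb) (mul_pos ha hb))
      (Real.rpow_pos_of_pos hZ _)
  -- conclude via monotonicity of log
  have hlog : Real.log (∑ x : (Fin k → 𝒳) × (Fin l → 𝒳),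
        ∑ x' : (Fin k → 𝒳) × (Fin l → 𝒳),
        (Qk x.1 * Ql x.2) * (Qk x'.1 * Ql x'.2) *
          (∑ y : (Fin k → 𝒴) × (Fin l → 𝒴),
            Real.sqrt ((∑ s₀, ∑ sk, Wk y.1 sk x.1 s₀ * Wl y.2 x.2 sk) *
              (∑ s₀', ∑ sk', Wk y.1 sk' x'.1 s₀' * Wl y.2 x'.2 sk'))) ^ (1 / lam)) ≤
      Real.log (∑ x₁, ∑ x₁', Qk x₁ * Qk x₁' *
            (∑ y₁, Real.sqrt ((∑ s₀, ∑ sk, Wk y₁ sk x₁ s₀) *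
              (∑ s₀', ∑ sk', Wk y₁ sk' x₁' s₀'))) ^ (1 / lam)) +
      Real.log (∑ x₂, ∑ x₂', Ql x₂ * Ql x₂' *
            (∑ y₂, Real.sqrt ((∑ sk, Wl y₂ x₂ sk) *
              (∑ sk', Wl y₂ x₂' sk'))) ^ (1 / lam)) := by
    rw [← Real.log_mul hSk_pos.ne' hSl_pos.ne']
    exact Real.log_le_log hSn_pos key
  have hmul := mul_le_mul_of_nonneg_left hlog hlam0.le
  linarith
end
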